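/- Let A ∈ ℤ^{d×n} be of rank d, b ∈ ℝⁿ, and ω ∈ ℝ^d. A point x* ∈ ℝⁿ satisfies x* ∈ ℒ_{A,b}⁺ and A·x* = ω if and only if x* is the unique minimizer of the convex optimization problem: minimize −(π/2)·bᵀx − Σ_{j=1}^n ( x_j · arccos(x_j) − √(1 − x_j²) ) subject to A·x = ω and x ∈ (−1,1)ⁿ. In particular, a minimizer exists if and only if ω ∈ Ω_{A,b}⁺, and in that case it is unique. -/

import Mathlib

noncomputable section


/-- The real row span of the integer matrix `A`. -/
def rowSpanR {d n : ℕ} (A : Matrix (Fin d) (Fin n) ℤ) : Submodule ℝ (Fin n → ℝ) :=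
  Submodule.span ℝ (Set.range fun i : Fin d => fun j : Fin n => (A i j : ℝ))

/-- The positive part `ℒ_{A,b}⁺ = cos(L_{A,b} ∩ (0,π)ⁿ)` of the Lissajous variety. -/
def LisPlus {d n : ℕ} (A : Matrix (Fin d) (Fin n) ℤ) (b : Fin n → ℝ) :
    Set (Fin n → ℝ) :=
  (fun x j => Real.cos (x j)) ''
    ({y | ∃ x ∈ rowSpanR A, y = x - (Real.pi / 2) • b} ∩
     {x | ∀ j, x j ∈ Set.Ioo 0 Real.pi})

/-- `Ω_{A,b}⁺ = A(ℒ_{A,b}⁺)`. -/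
def OmegaPlus {d n : ℕ} (A : Matrix (Fin d) (Fin n) ℤ) (b : Fin n → ℝ) :
    Set (Fin d → ℝ) :=
  (fun x i => ∑ j, (A i j : ℝ) * x j) '' LisPlus A b

/-- Feasibility for the convex program of Theorem 5.1. -/
def Feas12 {d n : ℕ} (A : Matrix (Fin d) (Fin n) ℤ) (ω : Fin d → ℝ)
    (x : Fin n → ℝ) : Prop :=
  (∀ i, ∑ j, (A i j : ℝ) * x j = ω i) ∧ ∀ j, x j ∈ Set.Ioo (-1 : ℝ) 1

/-- The objective function of Theorem 5.1. -/
def obj12 {n : ℕ} (b x : Fin n → ℝ) : ℝ :=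
  -(Real.pi / 2) * ∑ j, b j * x j -
    ∑ j, (x j * Real.arccos (x j) - Real.sqrt (1 - x j ^ 2))

/-! `arccosPrimitive t = t arccos t - √(1 - t²)` has derivative `arccos`, which is strictly
decreasing, so it is strictly concave on `(-1, 1)` and the objective is strictly convex there. The
negative gradient of the objective at `x` is `arccos x + (π/2) b`; hence `x` minimizes the objective
over `{Ax = ω} ∩ (-1, 1)ⁿ` iff this vector is orthogonal to `ker A`, i.e. lies in `Row(A)`, and then
the minimizer is strict. Writing `u = arccos x + (π/2) b ∈ Row(A)` gives `x = cos (u - (π/2) b)`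
with `u - (π/2) b ∈ (0, π)ⁿ`, which is exactly membership in `ℒ⁺_{A,b}`. -/

open Real Set Topology

lemma StrictConcaveOn.sub_lt_mul_sub_of_hasDerivAt {S : Set ℝ} {f : ℝ → ℝ} {f' x y : ℝ}
    (hf : StrictConcaveOn ℝ S f) (hx : x ∈ S) (hy : y ∈ S) (hne : y ≠ x)
    (hderiv : HasDerivAt f f' x) : f y - f x < f' * (y - x) := by
  rcases hne.lt_or_gt with hyx | hxy
  · have h := hf.lt_slope_of_hasDerivAt hy hx hyx hderiv
    rw [slope_def_field, lt_div_iff₀ (sub_pos.2 hyx)] at h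
    linarith
  · have h := hf.slope_lt_of_hasDerivAt hx hy hxy hderiv
    rw [slope_def_field, div_lt_iff₀ (sub_pos.2 hxy)] at h
    exact h

lemma mem_span_range_iff_forall_dotProduct {K ι n : Type*} [Field K] [Fintype n]
    (r : ι → n → K) (v : n → K) :
    v ∈ Submodule.span K (range r) ↔ ∀ h, (∀ i, r i ⬝ᵥ h = 0) → v ⬝ᵥ h = 0 := by
  refine ⟨fun hv h hr => ?_, fun hv => ?_⟩
  · induction hv using Submodule.span_induction with
    | mem u hu => obtain ⟨i, rfl⟩ := hu; exact hr i
    | zero => exact zero_dotProduct h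
    | add u w _ _ hu hw => rw [add_dotProduct, hu, hw, add_zero]
    | smul c u _ hu => rw [smul_dotProduct, hu, smul_zero]
  · classical
    by_contra hnot
    obtain ⟨f, hfv, hker⟩ := Submodule.exists_le_ker_of_notMem hnot
    set h : n → K := fun j => f fun k => if j = k then 1 else 0
    have hf : ∀ u, u ⬝ᵥ h = f u := fun u => by
      simp [dotProduct, h, f.pi_apply_eq_sum_univ u]
    refine hfv ?_
    rw [← hf]
    exact hv h fun i => (hf _).trans (hker (Submodule.subset_span ⟨i, rfl⟩))

def arccosPrimitive (t : ℝ) : ℝ := t * arccos t - √(1 - t ^ 2)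

lemma hasDerivAt_arccosPrimitive {t : ℝ} (ht : t ∈ Ioo (-1 : ℝ) 1) :
    HasDerivAt arccosPrimitive (arccos t) t := by
  have hpos : 0 < 1 - t ^ 2 := by nlinarith [ht.1, ht.2]
  have hsqrt : HasDerivAt (fun s : ℝ => √(1 - s ^ 2)) (-t / √(1 - t ^ 2)) t := by
    convert ((hasDerivAt_pow 2 t).const_sub 1).sqrt hpos.ne' using 1
    norm_num
    field_simp
  have hprod := (hasDerivAt_id' t).fun_mul (hasDerivAt_arccos ht.1.ne' ht.2.ne)
  exact (hprod.fun_sub hsqrt).congr_deriv (by ring)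

lemma strictConcaveOn_arccosPrimitive : StrictConcaveOn ℝ (Ioo (-1) 1) arccosPrimitive := by
  refine StrictAntiOn.strictConcaveOn_of_deriv (convex_Ioo _ _) ?_ ?_
  · exact ((continuous_id.mul continuous_arccos).sub
      (continuous_const.sub (continuous_pow 2)).sqrt).continuousOn
  · rw [interior_Ioo]
    intro s hs t ht hst
    rw [(hasDerivAt_arccosPrimitive hs).deriv, (hasDerivAt_arccosPrimitive ht).deriv]
    exact strictAntiOn_arccos (Ioo_subset_Icc_self hs) (Ioo_subset_Icc_self ht) hst

lemma arccosPrimitive_sub_lt {s t : ℝ} (hs : s ∈ Ioo (-1 : ℝ) 1) (ht : t ∈ Ioo (-1 : ℝ) 1)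
    (hne : s ≠ t) : arccosPrimitive s - arccosPrimitive t < arccos t * (s - t) :=
  strictConcaveOn_arccosPrimitive.sub_lt_mul_sub_of_hasDerivAt ht hs hne
    (hasDerivAt_arccosPrimitive ht)

section ConvexProgram

variable {d n : ℕ} {A : Matrix (Fin d) (Fin n) ℤ} {ω : Fin d → ℝ} {b : Fin n → ℝ}

lemma obj12_eq_sum (b x : Fin n → ℝ) :
    obj12 b x = ∑ j, (-(π / 2) * (b j * x j) - arccosPrimitive (x j)) := by
  simp only [obj12, arccosPrimitive, Finset.sum_sub_distrib, Finset.mul_sum]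

/-- The phase `u` with `x = cos (u - (π/2) b)`; it is also `-∇ (obj12 b)` at `x`. -/
def lissajousPhase (b x : Fin n → ℝ) : Fin n → ℝ :=
  fun j => arccos (x j) + π / 2 * b j

lemma hasDerivAt_obj12_add_smul {x : Fin n → ℝ} (h : Fin n → ℝ)
    (hx : ∀ j, x j ∈ Ioo (-1 : ℝ) 1) :
    HasDerivAt (fun t : ℝ => obj12 b (x + t • h)) (-(lissajousPhase b x ⬝ᵥ h)) 0 := by
  have hterm : ∀ j, HasDerivAt
      (fun t : ℝ => -(π / 2) * (b j * (x j + t * h j)) - arccosPrimitive (x j + t * h j))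
      (-(lissajousPhase b x j * h j)) 0 := by
    intro j
    have hline : HasDerivAt (fun t : ℝ => x j + t * h j) (h j) 0 := by
      simpa using ((hasDerivAt_id (0 : ℝ)).mul_const (h j)).const_add (x j)
    have hprim := (hasDerivAt_arccosPrimitive (by simpa using hx j)).comp 0 hline
    refine (((hline.const_mul (b j)).const_mul (-(π / 2))).fun_sub hprim).congr_deriv ?_
    simp only [lissajousPhase, zero_mul, add_zero]
    ring
  simp only [obj12_eq_sum, dotProduct, ← Finset.sum_neg_distrib, Pi.add_apply, Pi.smul_apply,
    smul_eq_mul]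
  exact HasDerivAt.fun_sum fun j _ => hterm j

lemma Feas12.eventually_add_smul {x h : Fin n → ℝ} (hx : Feas12 A ω x)
    (hh : ∀ i, ∑ j, (A i j : ℝ) * h j = 0) :
    ∀ᶠ t in 𝓝 (0 : ℝ), Feas12 A ω (x + t • h) := by
  have hbox : ∀ j, ∀ᶠ t in 𝓝 (0 : ℝ), x j + t * h j ∈ Ioo (-1 : ℝ) 1 := fun j =>
    (continuous_const.add (continuous_id.mul continuous_const)).continuousAt.eventually_mem
      (isOpen_Ioo.mem_nhds (by simpa using hx.2 j))
  filter_upwards [Filter.eventually_all.2 hbox] with t ht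
  refine ⟨fun i => ?_, ht⟩
  simp only [Pi.add_apply, Pi.smul_apply, smul_eq_mul, mul_add, Finset.sum_add_distrib,
    mul_left_comm _ t, ← Finset.mul_sum, hh i, hx.1 i, mul_zero, add_zero]

lemma lissajousPhase_mem_rowSpanR_of_isMin {x : Fin n → ℝ} (hx : Feas12 A ω x)
    (hmin : ∀ y, Feas12 A ω y → obj12 b x ≤ obj12 b y) :
    lissajousPhase b x ∈ rowSpanR A := by
  refine (mem_span_range_iff_forall_dotProduct _ _).2 fun h hh => ?_
  have hloc : IsLocalMin (fun t : ℝ => obj12 b (x + t • h)) 0 :=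
    (hx.eventually_add_smul hh).mono fun t ht => by simpa using hmin _ ht
  exact neg_eq_zero.1 (hloc.hasDerivAt_eq_zero (hasDerivAt_obj12_add_smul h hx.2))

lemma obj12_lt_of_lissajousPhase_mem {x y : Fin n → ℝ} (hx : Feas12 A ω x)
    (hphase : lissajousPhase b x ∈ rowSpanR A) (hy : Feas12 A ω y) (hne : y ≠ x) :
    obj12 b x < obj12 b y := by
  have horth : lissajousPhase b x ⬝ᵥ (y - x) = 0 := by
    refine (mem_span_range_iff_forall_dotProduct _ _).1 hphase _ fun i => ?_
    simp only [dotProduct, Pi.sub_apply, mul_sub, Finset.sum_sub_distrib, hx.1 i, hy.1 i,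
      sub_self]
  have hgap : obj12 b y - obj12 b x + lissajousPhase b x ⬝ᵥ (y - x) =
      ∑ j, (arccos (x j) * (y j - x j) - (arccosPrimitive (y j) - arccosPrimitive (x j))) := by
    simp only [obj12_eq_sum, dotProduct, lissajousPhase, ← Finset.sum_sub_distrib,
      ← Finset.sum_add_distrib, Pi.sub_apply]
    exact Finset.sum_congr rfl fun j _ => by ring
  obtain ⟨j₀, hj₀⟩ : ∃ j, y j ≠ x j := Function.ne_iff.1 hne
  have hpos : 0 < ∑ j, (arccos (x j) * (y j - x j) -
      (arccosPrimitive (y j) - arccosPrimitive (x j))) := by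
    refine Finset.sum_pos' (fun j _ => ?_) ⟨j₀, Finset.mem_univ _, ?_⟩
    · rcases eq_or_ne (y j) (x j) with hj | hj
      · simp [hj]
      · exact sub_nonneg.2 (arccosPrimitive_sub_lt (hy.2 j) (hx.2 j) hj).le
    · exact sub_pos.2 (arccosPrimitive_sub_lt (hy.2 j₀) (hx.2 j₀) hj₀)
  linarith

lemma mem_lisPlus_iff {x : Fin n → ℝ} :
    x ∈ LisPlus A b ↔ (∀ j, x j ∈ Ioo (-1 : ℝ) 1) ∧ lissajousPhase b x ∈ rowSpanR A := by
  constructor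
  · rintro ⟨z, ⟨⟨u, hu, rfl⟩, hz⟩, rfl⟩
    refine ⟨fun j => mapsTo_cos_Ioo (hz j), ?_⟩
    convert hu using 1
    funext j
    have hzj : u j - π / 2 * b j ∈ Ioo 0 π := hz j
    simp only [lissajousPhase, Pi.sub_apply, Pi.smul_apply, smul_eq_mul,
      arccos_cos hzj.1.le hzj.2.le, sub_add_cancel]
  · rintro ⟨hx, hphase⟩
    refine ⟨fun j => arccos (x j), ⟨⟨_, hphase, ?_⟩, fun j => ?_⟩, ?_⟩
    · funext j
      simp [lissajousPhase]
    · exact ⟨arccos_pos.2 (hx j).2, arccos_lt_pi.2 (hx j).1⟩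
    · funext j
      exact cos_arccos (hx j).1.le (hx j).2.le

lemma isMin_obj12_iff {x : Fin n → ℝ} :
    (Feas12 A ω x ∧ ∀ y, Feas12 A ω y → obj12 b x ≤ obj12 b y) ↔
      x ∈ LisPlus A b ∧ ∀ i, ∑ j, (A i j : ℝ) * x j = ω i := by
  rw [mem_lisPlus_iff]
  refine ⟨fun ⟨hx, hmin⟩ => ⟨⟨hx.2, lissajousPhase_mem_rowSpanR_of_isMin hx hmin⟩, hx.1⟩,
    fun ⟨⟨hbox, hphase⟩, hω⟩ => ⟨⟨hω, hbox⟩, fun y hy => ?_⟩⟩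
  rcases eq_or_ne y x with rfl | hne
  · exact le_rfl
  · exact (obj12_lt_of_lissajousPhase_mem ⟨hω, hbox⟩ hphase hy hne).le

end ConvexProgram

theorem stmt12_general {d n : ℕ} (A : Matrix (Fin d) (Fin n) ℤ)
    (b : Fin n → ℝ) (ω : Fin d → ℝ) :
    (∀ xstar : Fin n → ℝ,
      (xstar ∈ LisPlus A b ∧ ∀ i, ∑ j, (A i j : ℝ) * xstar j = ω i) ↔
      (Feas12 A ω xstar ∧ ∀ x : Fin n → ℝ, Feas12 A ω x → x ≠ xstar →
        obj12 b xstar < obj12 b x)) ∧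
    ((∃ xstar : Fin n → ℝ, Feas12 A ω xstar ∧
        ∀ x : Fin n → ℝ, Feas12 A ω x → obj12 b xstar ≤ obj12 b x) ↔
      ω ∈ OmegaPlus A b) ∧
    (∀ x₁ x₂ : Fin n → ℝ,
      (Feas12 A ω x₁ ∧ ∀ x, Feas12 A ω x → obj12 b x₁ ≤ obj12 b x) →
      (Feas12 A ω x₂ ∧ ∀ x, Feas12 A ω x → obj12 b x₂ ≤ obj12 b x) → x₁ = x₂) := by
  have hstrict : ∀ {x}, Feas12 A ω x → (∀ y, Feas12 A ω y → obj12 b x ≤ obj12 b y) →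
      ∀ y, Feas12 A ω y → y ≠ x → obj12 b x < obj12 b y := fun hx hmin _ =>
    obj12_lt_of_lissajousPhase_mem hx (lissajousPhase_mem_rowSpanR_of_isMin hx hmin)
  refine ⟨fun x => ⟨fun hx => ?_, fun ⟨hx, hlt⟩ => isMin_obj12_iff.1 ⟨hx, fun y hy => ?_⟩⟩,
    ?_, fun x₁ x₂ h₁ h₂ => ?_⟩
  · obtain ⟨hfeas, hmin⟩ := isMin_obj12_iff.2 hx
    exact ⟨hfeas, hstrict hfeas hmin⟩
  · rcases eq_or_ne y x with rfl | hne
    · exact le_rfl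
    · exact (hlt y hy hne).le
  · simp only [isMin_obj12_iff, OmegaPlus, mem_image, funext_iff]
  · by_contra hne
    exact (h₂.2 x₁ h₁.1).not_gt (hstrict h₁.1 h₁.2 x₂ h₂.1 (Ne.symm hne))

/-- Theorem 5.1: `x* ∈ ℒ_{A,b}⁺ ∩ {Ax = ω}` iff `x*` is the unique minimizer of the
convex program; a minimizer exists iff `ω ∈ Ω_{A,b}⁺`, and in that case it is unique. -/
theorem stmt12 {d n : ℕ} (A : Matrix (Fin d) (Fin n) ℤ)
    (hrank : (A.map fun z => (z : ℚ)).rank = d) (b : Fin n → ℝ) (ω : Fin d → ℝ) :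
    (∀ xstar : Fin n → ℝ,
      (xstar ∈ LisPlus A b ∧ ∀ i, ∑ j, (A i j : ℝ) * xstar j = ω i) ↔
      (Feas12 A ω xstar ∧ ∀ x : Fin n → ℝ, Feas12 A ω x → x ≠ xstar →
        obj12 b xstar < obj12 b x)) ∧
    ((∃ xstar : Fin n → ℝ, Feas12 A ω xstar ∧
        ∀ x : Fin n → ℝ, Feas12 A ω x → obj12 b xstar ≤ obj12 b x) ↔
      ω ∈ OmegaPlus A b) ∧
    (∀ x₁ x₂ : Fin n → ℝ,
      (Feas12 A ω x₁ ∧ ∀ x, Feas12 A ω x → obj12 b x₁ ≤ obj12 b x) →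
      (Feas12 A ω x₂ ∧ ∀ x, Feas12 A ω x → obj12 b x₂ ≤ obj12 b x) → x₁ = x₂) :=
  stmt12_general A b ω
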